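/- arXiv:1902.10204 — 3 statements merged into one kernel-verified Lean document; each statement's English description precedes it below -/
import Mathlib

section
/- Let T be a doubly regular tournament on n vertices. Then for any two disjoint subsets A, B of the vertex set, e(A,B) - e(B,A) ≤ √(n·|A|·|B|), where e(A,B) is the number of edges directed from A to B. -/
def IsTournament {V : Type*} (E : V → V → Prop) : Prop :=
  (∀ x, ¬ E x x) ∧ ∀ x y : V, x ≠ y → (E x y ↔ ¬ E y x)

/-- Out-degree of a vertex. -/
noncomputable def outDeg {V : Type*} (E : V → V → Prop) (x : V) : ℕ :=
  Nat.card {y // E x y}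

/-- Number of common out-neighbors `|N⁺(x,y)|`. -/
noncomputable def commonOut {V : Type*} (E : V → V → Prop) (x y : V) : ℕ :=
  Nat.card {z // E x z ∧ E y z}

/-- A doubly regular tournament on `n = 4k+3` vertices: it is `(n-1)/2 = 2k+1`-regular and
any two distinct vertices have exactly `(n-3)/4 = k` common out-neighbors. -/
noncomputable def IsDoublyRegular {V : Type*} [Fintype V] (E : V → V → Prop) : Prop :=
  IsTournament E ∧ ∃ k : ℕ, Fintype.card V = 4 * k + 3 ∧
    (∀ x, outDeg E x = 2 * k + 1) ∧ ∀ x y : V, x ≠ y → commonOut E x y = k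

/-- `e(A,B)`: the number of edges directed from `A` to `B`. -/
noncomputable def eAB {V : Type*} (E : V → V → Prop) (A B : Finset V) : ℕ :=
  Nat.card {p : V × V // p.1 ∈ A ∧ p.2 ∈ B ∧ E p.1 p.2}

open Finset
open scoped Classical

private lemma eAB_eq_sumR {V : Type*} [Fintype V] (E : V → V → Prop) (A B : Finset V) :
    (eAB E A B : ℝ) = ∑ a ∈ A, ∑ b ∈ B, (if E a b then (1:ℝ) else 0) := by
  have h0 : (eAB E A B : ℕ) = ∑ a ∈ A, ∑ b ∈ B, (if E a b then 1 else 0) := by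
    rw [eAB, Nat.card_eq_fintype_card, Fintype.card_subtype, Finset.card_filter,
      Fintype.sum_prod_type]
    simp only [ite_and]
    rw [← Fintype.sum_ite_mem A]
    refine Finset.sum_congr rfl fun x _ => ?_
    by_cases h : x ∈ A
    · simp only [h, if_true]
      rw [← Fintype.sum_ite_mem B]
    · simp [h]
  rw [h0]
  push_cast
  rfl

theorem eAB_sub_eBA_le {V : Type*} [Fintype V] (E : V → V → Prop)
    (hDR : IsDoublyRegular E) (A B : Finset V) (hAB : Disjoint A B) :
    (eAB E A B : ℝ) - (eAB E B A : ℝ) ≤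
      Real.sqrt ((Fintype.card V : ℝ) * A.card * B.card) := by
  classical
  obtain ⟨⟨hirr, hcmp⟩, k, hn, hdeg, hcom⟩ := hDR
  set n : ℕ := Fintype.card V with hn'
  set χ : V → V → ℝ := fun x y => if E x y then (1:ℝ) else 0 with hχ
  set s : V → V → ℝ := fun x y => χ x y - χ y x with hsdef
  have hχ01 : ∀ x y, χ x y = 0 ∨ χ x y = 1 := by
    intro x y; by_cases h : E x y <;> simp [hχ, h]
  have hs_self : ∀ x, s x x = 0 := by intro x; simp [hsdef, hχ, hirr x]
  have hs_ne : ∀ x y, x ≠ y → s x y = 2 * χ x y - 1 := by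
    intro x y hxy
    by_cases h : E x y
    · have h' : ¬ E y x := (hcmp x y hxy).mp h
      simp [hsdef, hχ, h, h']
      norm_num
    · have h' : E y x := by
        by_contra h''
        exact h ((hcmp x y hxy).mpr h'')
      simp [hsdef, hχ, h, h']
  -- degree sums
  have hdegR : ∀ x, (∑ z : V, χ x z) = 2 * (k:ℝ) + 1 := by
    intro x
    have h0 : (∑ z : V, (if E x z then 1 else 0)) = 2 * k + 1 := by
      rw [← hdeg x, outDeg, Nat.card_eq_fintype_card, Fintype.card_subtype, Finset.card_filter]
    calc ∑ z : V, χ x z = ((∑ z : V, (if E x z then 1 else 0) : ℕ) : ℝ) := by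
          push_cast; rfl
      _ = 2 * (k:ℝ) + 1 := by rw [h0]; push_cast; ring
  have hcomR : ∀ x y, x ≠ y → (∑ z : V, χ x z * χ y z) = (k:ℝ) := by
    intro x y hxy
    have h0 : (∑ z : V, (if E x z ∧ E y z then 1 else 0)) = k := by
      rw [← hcom x y hxy, commonOut, Nat.card_eq_fintype_card, Fintype.card_subtype,
        Finset.card_filter]
    calc ∑ z : V, χ x z * χ y z
        = ((∑ z : V, (if E x z ∧ E y z then 1 else 0) : ℕ) : ℝ) := by
          push_cast
          refine Finset.sum_congr rfl fun z _ => ?_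
          by_cases h1 : E x z <;> by_cases h2 : E y z <;> simp [hχ, h1, h2]
      _ = (k:ℝ) := by rw [h0]
  -- key off-diagonal computation
  have hone : ∀ a a' : V, a ≠ a' → χ a a' + χ a' a = 1 := by
    intro a a' hne
    by_cases h : E a a'
    · have h' : ¬ E a' a := (hcmp a a' hne).mp h
      simp [hχ, h, h']
    · have h' : E a' a := by
        by_contra h''
        exact h ((hcmp a a' hne).mpr h'')
      simp [hχ, h, h']
  have hkey : ∀ a a' : V, ∑ z : V, s a z * s a' z =
      (if a = a' then (n:ℝ) else 0) - 1 := by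
    intro a a'
    by_cases hne : a = a'
    · subst hne
      simp only [if_pos rfl]
      have hterm : ∀ z : V, s a z * s a z = 1 - (if z = a then (1:ℝ) else 0) := by
        intro z
        by_cases h1 : z = a
        · simp [h1, hs_self]
        · rw [hs_ne a z (Ne.symm h1), if_neg h1]
          rcases hχ01 a z with h | h <;> rw [h] <;> ring
      rw [Finset.sum_congr rfl fun z _ => hterm z, Finset.sum_sub_distrib,
        Finset.sum_const, Finset.card_univ, Finset.sum_ite_eq' univ a (fun _ => (1:ℝ)),
        if_pos (Finset.mem_univ a)]
      simp [hn']
    · simp only [if_neg hne]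
      set g : V → ℝ := fun z => 4 * (χ a z * χ a' z) - 2 * χ a z - 2 * χ a' z + 1 with hg
      have hterm : ∀ z : V, s a z * s a' z =
          g z - (if z = a then g a else 0) - (if z = a' then g a' else 0) := by
        intro z
        by_cases h1 : z = a
        · subst h1
          rw [if_pos rfl, if_neg hne]
          simp [hs_self]
        · by_cases h2 : z = a'
          · subst h2
            rw [if_neg h1, if_pos rfl]
            simp [hs_self]
          · rw [if_neg h1, if_neg h2, hs_ne a z (Ne.symm h1), hs_ne a' z (Ne.symm h2), hg]
            ring
      rw [Finset.sum_congr rfl fun z _ => hterm z]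
      rw [Finset.sum_sub_distrib, Finset.sum_sub_distrib]
      rw [Finset.sum_ite_eq' univ a (fun _ => g a), Finset.sum_ite_eq' univ a' (fun _ => g a'),
        if_pos (Finset.mem_univ a), if_pos (Finset.mem_univ a')]
      have hsum : ∑ z : V, g z = 4 * (k:ℝ) - 2 * (2*(k:ℝ)+1) - 2 * (2*(k:ℝ)+1) + n := by
        rw [hg]
        simp only [Finset.sum_add_distrib, Finset.sum_sub_distrib, ← Finset.mul_sum,
          Finset.sum_const, Finset.card_univ, nsmul_eq_mul, mul_one]
        rw [hcomR a a' hne, hdegR a, hdegR a']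
      have hga : g a = 1 - 2 * χ a' a := by
        have : χ a a = 0 := by simp [hχ, hirr a]
        rw [hg]; simp only []; rw [this]; ring
      have hga' : g a' = 1 - 2 * χ a a' := by
        have : χ a' a' = 0 := by simp [hχ, hirr a']
        rw [hg]; simp only []; rw [this]; ring
      have hnr : (n:ℝ) = 4*(k:ℝ)+3 := by rw [hn]; push_cast; ring
      have h1 := hone a a' hne
      rw [hsum, hga, hga', hnr]
      linarith
  -- the vector f
  set f : V → ℝ := fun z => ∑ a ∈ A, s a z with hf
  have hLHS : (eAB E A B : ℝ) - (eAB E B A : ℝ) = ∑ b ∈ B, f b := by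
    rw [eAB_eq_sumR E A B, eAB_eq_sumR E B A, Finset.sum_comm]
    rw [← Finset.sum_sub_distrib]
    refine Finset.sum_congr rfl fun b _ => ?_
    rw [← Finset.sum_sub_distrib]
  have hsumsq : ∑ z : V, (f z)^2 = (A.card : ℝ) * ((n:ℝ) - A.card) := by
    have h1 : ∀ z, (f z)^2 = ∑ a ∈ A, ∑ a' ∈ A, s a z * s a' z := by
      intro z
      rw [hf, sq, Finset.sum_mul_sum]
    rw [Finset.sum_congr rfl fun z _ => h1 z, Finset.sum_comm]
    have h2 : ∀ a ∈ A, (∑ z : V, ∑ a' ∈ A, s a z * s a' z) = (n:ℝ) - A.card := by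
      intro a ha
      rw [Finset.sum_comm]
      have h3 : ∀ a' ∈ A, (∑ z : V, s a z * s a' z) = (if a' = a then (n:ℝ) else 0) - 1 := by
        intro a' _
        rw [hkey a a']
        by_cases h : a = a' <;> simp [h, eq_comm]
      rw [Finset.sum_congr rfl h3, Finset.sum_sub_distrib, Finset.sum_ite_eq' A a (fun _ => (n:ℝ)),
        if_pos ha, Finset.sum_const, nsmul_eq_mul, mul_one]
    rw [Finset.sum_congr rfl h2, Finset.sum_const, nsmul_eq_mul]
  -- Cauchy-Schwarz and finish
  have hCS : (∑ b ∈ B, f b)^2 ≤ (B.card : ℝ) * ((n:ℝ) * A.card) := by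
    have h1 : (∑ b ∈ B, f b)^2 ≤ (∑ b ∈ B, (1:ℝ)^2) * ∑ b ∈ B, (f b)^2 := by
      have := Finset.sum_mul_sq_le_sq_mul_sq B (fun _ => (1:ℝ)) f
      simpa using this
    have h2 : ∑ b ∈ B, (f b)^2 ≤ ∑ z : V, (f z)^2 :=
      Finset.sum_le_sum_of_subset_of_nonneg (Finset.subset_univ B)
        (fun z _ _ => sq_nonneg _)
    have h3 : (∑ z : V, (f z)^2) ≤ (n:ℝ) * A.card := by
      rw [hsumsq]
      have hA : (A.card : ℝ) ≥ 0 := by positivity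
      nlinarith [hA, sq_nonneg ((A.card : ℝ))]
    calc (∑ b ∈ B, f b)^2 ≤ (∑ b ∈ B, (1:ℝ)^2) * ∑ b ∈ B, (f b)^2 := h1
      _ = (B.card : ℝ) * ∑ b ∈ B, (f b)^2 := by simp
      _ ≤ (B.card : ℝ) * ((n:ℝ) * A.card) := by
          have hB : (0:ℝ) ≤ B.card := by positivity
          exact mul_le_mul_of_nonneg_left (le_trans h2 h3) hB
  rw [hLHS]
  calc ∑ b ∈ B, f b ≤ |∑ b ∈ B, f b| := le_abs_self _
    _ = Real.sqrt ((∑ b ∈ B, f b)^2) := (Real.sqrt_sq_eq_abs _).symm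
    _ ≤ Real.sqrt ((B.card : ℝ) * ((n:ℝ) * A.card)) := Real.sqrt_le_sqrt hCS
    _ = Real.sqrt ((n : ℝ) * A.card * B.card) := by rw [show (B.card : ℝ) * ((n:ℝ) * A.card) = (n:ℝ) * A.card * B.card by ring]
end

section
/- Let T be a doubly regular tournament on n vertices. Then C(T) ≤ (1/2)·(n choose 2) + n^{3/2}·log₂(2n). -/
section AUX1
open Finset

/-- the "highest differing bit" condition -/
def bitCond (p q t : ℕ) : Prop :=
  p >>> (t+1) = q >>> (t+1) ∧ p.testBit t = false ∧ q.testBit t = true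

lemma bitCond_lt {p q t : ℕ} (h : bitCond p q t) : p < q := by
  obtain ⟨hs, hp, hq⟩ := h
  refine Nat.lt_of_testBit t hp hq fun j hj => ?_
  have h1 : p.testBit j = (p >>> (t+1)).testBit (j - (t+1)) := by
    rw [Nat.testBit_shiftRight]; congr 1; omega
  have h2 : q.testBit j = (q >>> (t+1)).testBit (j - (t+1)) := by
    rw [Nat.testBit_shiftRight]; congr 1; omega
  rw [h1, h2, hs]

lemma bitCond_unique {p q t t' : ℕ} (h : bitCond p q t) (h' : bitCond p q t') : t = t' := by
  by_contra hne
  wlog hlt : t < t' generalizing t t'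
  · exact this h' h (Ne.symm hne) (by omega)
  have : p.testBit t' = q.testBit t' := by
    have h1 : p.testBit t' = (p >>> (t+1)).testBit (t' - (t+1)) := by
      rw [Nat.testBit_shiftRight]; congr 1; omega
    have h2 : q.testBit t' = (q >>> (t+1)).testBit (t' - (t+1)) := by
      rw [Nat.testBit_shiftRight]; congr 1; omega
    rw [h1, h2, h.1]
  rw [h'.2.1, h'.2.2] at this
  simp at this

lemma bitCond_exists {p q : ℕ} (h : p < q) : ∃ t, bitCond p q t := by
  have hy0 : p ^^^ q ≠ 0 := fun h0 => absurd ((show p = q by have := Nat.xor_xor_cancel_left p q; rw [h0, Nat.xor_zero] at this; omega)) (by omega)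
  obtain ⟨t, h1, h2⟩ : ∃ t, 2 ^ t ≤ p ^^^ q ∧ p ^^^ q < 2 ^ (t + 1) :=
    ⟨(p ^^^ q).log2, Nat.log2_self_le hy0, Nat.lt_log2_self⟩
  have hyt : (p ^^^ q).testBit t = true := by
    have hdiv : (p ^^^ q) / 2 ^ t = 1 := by
      have ha : 1 ≤ (p ^^^ q) / 2 ^ t :=
        (Nat.one_le_div_iff (Nat.two_pow_pos t)).mpr h1
      have hb : (p ^^^ q) / 2 ^ t < 2 := by
        apply Nat.div_lt_of_lt_mul
        rw [pow_succ] at h2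
        omega
      omega
    simp [Nat.testBit_eq_decide_div_mod_eq, hdiv]
  have hagree : ∀ j, t < j → p.testBit j = q.testBit j := by
    intro j hj
    have hf : (p ^^^ q).testBit j = false := by
      apply Nat.testBit_lt_two_pow
      exact lt_of_lt_of_le h2 (Nat.pow_le_pow_right (by norm_num) (by omega))
    rw [Nat.testBit_xor] at hf
    revert hf; cases hp : p.testBit j <;> cases hq : q.testBit j <;> simp
  have hdiff : ¬ (p.testBit t = q.testBit t) := by
    intro he
    rw [Nat.testBit_xor, he, Bool.xor_self] at hyt
    simp at hyt
  have hpt : p.testBit t = false ∧ q.testBit t = true := by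
    cases hp : p.testBit t <;> cases hq : q.testBit t
    · exact absurd (hp.trans hq.symm) hdiff
    · exact ⟨rfl, rfl⟩
    · have : q < p := Nat.lt_of_testBit t hq hp fun j hj => (hagree j hj).symm
      omega
    · exact absurd (hp.trans hq.symm) hdiff
  refine ⟨t, ?_, hpt.1, hpt.2⟩
  apply Nat.eq_of_testBit_eq
  intro i
  rw [Nat.testBit_shiftRight, Nat.testBit_shiftRight]
  exact hagree _ (by omega)

lemma bitCond_lt_L {q L t : ℕ} (hq : q < 2 ^ L) (h : q.testBit t = true) : t < L := by
  by_contra hc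
  have hf : q.testBit t = false := Nat.testBit_lt_two_pow
    (lt_of_lt_of_le hq (Nat.pow_le_pow_right (by norm_num) (by omega)))
  rw [h] at hf; simp at hf

open Classical in
lemma bit_decomp (L p q : ℕ) (hq : q < 2 ^ L) :
    (if p < q then (1:ℝ) else 0) = ∑ t ∈ range L, if bitCond p q t then (1:ℝ) else 0 := by
  by_cases h : p < q
  · obtain ⟨t0, ht0⟩ := bitCond_exists h
    have ht0L : t0 < L := bitCond_lt_L hq ht0.2.2
    rw [if_pos h, Finset.sum_eq_single_of_mem t0 (mem_range.mpr ht0L)]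
    · rw [if_pos ht0]
    · intro t _ htne
      rw [if_neg]
      intro hc
      exact htne (bitCond_unique hc ht0)
  · rw [if_neg h, eq_comm]
    apply Finset.sum_eq_zero
    intro t _
    rw [if_neg]
    intro hc
    exact h (bitCond_lt hc)

open Classical in
lemma bit_split (L p q t : ℕ) (hp : p < 2 ^ L) :
    (if bitCond p q t then (1:ℝ) else 0) =
      ∑ c ∈ range (2 ^ L), (if p >>> (t+1) = c ∧ p.testBit t = false then (1:ℝ) else 0)
        * (if q >>> (t+1) = c ∧ q.testBit t = true then (1:ℝ) else 0) := by
  have hmem : p >>> (t+1) ∈ range (2 ^ L) := by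
    rw [mem_range, Nat.shiftRight_eq_div_pow]
    exact lt_of_le_of_lt (Nat.div_le_self _ _) hp
  rw [Finset.sum_eq_single_of_mem _ hmem]
  · by_cases h : bitCond p q t
    · rw [if_pos h, if_pos ⟨rfl, h.2.1⟩, if_pos ⟨h.1.symm, h.2.2⟩]; norm_num
    · rw [if_neg h]
      by_cases h1 : p >>> (t+1) = p >>> (t+1) ∧ p.testBit t = false
      · by_cases h2 : q >>> (t+1) = p >>> (t+1) ∧ q.testBit t = true
        · exact absurd ⟨h2.1.symm, h1.2, h2.2⟩ h
        · rw [if_neg h2, mul_zero]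
      · rw [if_neg h1, zero_mul]
  · intro c _ hcne
    rw [if_neg fun hc => hcne hc.1.symm, zero_mul]


open Classical in
noncomputable def ind (p : Prop) : ℝ := if p then 1 else 0

lemma ind_mul (p q : Prop) : ind p * ind q = ind (p ∧ q) := by
  unfold ind; by_cases hp : p <;> by_cases hq : q <;> simp [hp, hq]

lemma ind_zero_or_one (p : Prop) : ind p = 0 ∨ ind p = 1 := by
  unfold ind; by_cases hp : p <;> simp [hp]

lemma natCard_eq_sum {α : Type*} [Fintype α] (p : α → Prop) :
    (Nat.card {x // p x} : ℝ) = ∑ x, ind (p x) := by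
  classical
  rw [Nat.card_eq_fintype_card, Fintype.card_subtype, Finset.card_filter]
  push_cast
  exact Finset.sum_congr rfl fun x _ => by by_cases h : p x <;> simp [h, ind]

section Main

variable {n : ℕ} (E : Fin n → Fin n → Prop)

noncomputable def Sm (x y : Fin n) : ℝ := ind (E x y) - ind (E y x)

variable {E} {k : ℕ} (hT : IsTournament E) (hn : n = 4 * k + 3)
  (hout : ∀ x, outDeg E x = 2 * k + 1)
  (hco : ∀ x y : Fin n, x ≠ y → commonOut E x y = k)

include hT in
lemma ind_add_ind {x y : Fin n} (h : x ≠ y) : ind (E x y) + ind (E y x) = 1 := by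
  unfold ind
  rcases (hT.2 x y h) with hi
  by_cases hxy : E x y
  · simp [hxy, hi.mp hxy]
  · simp [hxy, (hT.2 y x h.symm).mpr fun hc => hxy (by tauto)]

include hout in
lemma row_sum (x : Fin n) : ∑ y, ind (E x y) = (2 * k + 1 : ℝ) := by
  have := hout x
  unfold outDeg at this
  rw [← natCard_eq_sum, this]
  push_cast; ring

include hco in
lemma co_sum {x y : Fin n} (h : x ≠ y) : ∑ z, ind (E x z) * ind (E y z) = (k : ℝ) := by
  have := hco x y h
  unfold commonOut at this
  simp only [ind_mul]
  rw [← natCard_eq_sum, this]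

include hT hn hout hco in
lemma key_identity (y z : Fin n) :
    ∑ x, Sm E x y * Sm E x z = (if y = z then (n : ℝ) else 0) - 1 := by
  by_cases hyz : y = z
  · subst hyz
    rw [if_pos rfl]
    have h1 : ∀ x, Sm E x y * Sm E x y = if x = y then 0 else 1 := by
      intro x
      by_cases hx : x = y
      · subst hx; simp [Sm, ind, hT.1 x]
      · have := ind_add_ind hT (hx : x ≠ y)
        rcases ind_zero_or_one (E x y) with h | h <;>
          rcases ind_zero_or_one (E y x) with h' | h' <;>
          simp [Sm, h, h', hx] at this ⊢ <;> linarith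
    simp only [h1]
    rw [← Finset.sum_erase_add _ _ (Finset.mem_univ y)]
    have h2 : ∀ x ∈ univ.erase y, (if x = y then (0:ℝ) else 1) = 1 :=
      fun x hx => if_neg (Finset.mem_erase.mp hx).1
    rw [Finset.sum_congr rfl h2, if_pos rfl, add_zero, Finset.sum_const,
      Finset.card_erase_of_mem (Finset.mem_univ y), Finset.card_univ, Fintype.card_fin,
      nsmul_eq_mul, mul_one]
    have hn1 : (1:ℕ) ≤ n := by omega
    push_cast [hn1]
    ring
  · rw [if_neg hyz]
    -- split off x = y and x = z
    have hyz' : (y : Fin n) ≠ z := hyz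
    have hsplit : ∑ x, Sm E x y * Sm E x z
        = ∑ x ∈ (univ.erase y).erase z, Sm E x y * Sm E x z
          + Sm E z y * Sm E z z + Sm E y y * Sm E y z := by
      rw [Finset.sum_erase_add _ _ (Finset.mem_erase.mpr ⟨Ne.symm hyz, Finset.mem_univ z⟩),
        Finset.sum_erase_add _ _ (Finset.mem_univ y)]
    have hSyy : Sm E y y = 0 := by simp [Sm, ind, hT.1 y]
    have hSzz : Sm E z z = 0 := by simp [Sm, ind, hT.1 z]
    rw [hsplit, hSyy, hSzz, mul_zero, zero_mul, add_zero, add_zero]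
    -- pointwise rewrite on the rest
    have hpt : ∀ x ∈ (univ.erase y).erase z, Sm E x y * Sm E x z
        = 1 - 2 * ind (E y x) - 2 * ind (E z x) + 4 * (ind (E y x) * ind (E z x)) := by
      intro x hx
      have hxz : x ≠ z := (Finset.mem_erase.mp hx).1
      have hxy : x ≠ y := (Finset.mem_erase.mp (Finset.mem_erase.mp hx).2).1
      have h1 := ind_add_ind hT hxy
      have h2 := ind_add_ind hT hxz
      have e1 : Sm E x y = 1 - 2 * ind (E y x) := by unfold Sm; linarith
      have e2 : Sm E x z = 1 - 2 * ind (E z x) := by unfold Sm; linarith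
      rw [e1, e2]; ring
    rw [Finset.sum_congr rfl hpt]
    have card_rest : ((univ.erase y).erase z).card = n - 2 := by
      rw [Finset.card_erase_of_mem (Finset.mem_erase.mpr ⟨Ne.symm hyz, Finset.mem_univ z⟩),
        Finset.card_erase_of_mem (Finset.mem_univ y), Finset.card_univ, Fintype.card_fin]
      omega
    have hzy : z ∈ univ.erase y := Finset.mem_erase.mpr ⟨Ne.symm hyz, Finset.mem_univ z⟩
    have hyz2 : y ∈ univ.erase z := Finset.mem_erase.mpr ⟨hyz, Finset.mem_univ y⟩
    have hyx_sum : ∑ x ∈ (univ.erase y).erase z, ind (E y x)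
        = (2 * k + 1 : ℝ) - ind (E y z) := by
      have step : ∑ x ∈ (univ.erase y).erase z, ind (E y x) + ind (E y z) + ind (E y y)
          = ∑ x, ind (E y x) := by
        rw [Finset.sum_erase_add _ _ hzy, Finset.sum_erase_add _ _ (Finset.mem_univ y)]
      have h0 : ind (E y y) = 0 := by simp [ind, hT.1 y]
      have hr := row_sum hout y
      linarith
    have hzx_sum : ∑ x ∈ (univ.erase y).erase z, ind (E z x)
        = (2 * k + 1 : ℝ) - ind (E z y) := by
      have hswap : (univ.erase y).erase z = (univ.erase z).erase y := by
        rw [Finset.erase_right_comm]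
      have step : ∑ x ∈ (univ.erase z).erase y, ind (E z x) + ind (E z y) + ind (E z z)
          = ∑ x, ind (E z x) := by
        rw [Finset.sum_erase_add _ _ hyz2, Finset.sum_erase_add _ _ (Finset.mem_univ z)]
      have h0 : ind (E z z) = 0 := by simp [ind, hT.1 z]
      have hr := row_sum hout z
      rw [hswap]
      linarith
    have hprod_sum : ∑ x ∈ (univ.erase y).erase z, ind (E y x) * ind (E z x) = (k : ℝ) := by
      have step : ∑ x ∈ (univ.erase y).erase z, ind (E y x) * ind (E z x)
            + ind (E y z) * ind (E z z) + ind (E y y) * ind (E z y)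
          = ∑ x, ind (E y x) * ind (E z x) := by
        rw [Finset.sum_erase_add _ _ hzy, Finset.sum_erase_add _ _ (Finset.mem_univ y)]
      have h0 : ind (E z z) = 0 := by simp [ind, hT.1 z]
      have h0' : ind (E y y) = 0 := by simp [ind, hT.1 y]
      have hr := co_sum hco hyz'
      rw [h0, h0', mul_zero, zero_mul] at step
      linarith
    have hyzzy : ind (E y z) + ind (E z y) = 1 := ind_add_ind hT hyz
    simp only [Finset.sum_add_distrib, Finset.sum_sub_distrib, ← Finset.mul_sum,
      Finset.sum_const, card_rest, hyx_sum, hzx_sum, hprod_sum, nsmul_eq_mul]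
    have hcast : ((n - 2 : ℕ) : ℝ) = (n : ℝ) - 2 := by
      have : (2:ℕ) ≤ n := by omega
      push_cast [this]; ring
    rw [hcast]
    have hncast : (n : ℝ) = 4 * k + 3 := by rw [hn]; push_cast; ring
    rw [hncast]; linarith

include hT hn hout hco in
lemma op_bound (a b : Fin n → ℝ) :
    ∑ x, ∑ y, a x * Sm E x y * b y
      ≤ Real.sqrt n * Real.sqrt (∑ x, a x ^ 2) * Real.sqrt (∑ y, b y ^ 2) := by
  set g : Fin n → ℝ := fun x => ∑ y, Sm E x y * b y with hg
  have hLHS : ∑ x, ∑ y, a x * Sm E x y * b y = ∑ x, a x * g x := by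
    refine Finset.sum_congr rfl fun x _ => ?_
    rw [hg, Finset.mul_sum]
    exact Finset.sum_congr rfl fun y _ => by ring
  have hg2 : ∑ x, g x ^ 2 ≤ (n : ℝ) * ∑ y, b y ^ 2 := by
    have expand : ∑ x, g x ^ 2 = ∑ y, ∑ z, b y * b z * ∑ x, Sm E x y * Sm E x z := by
      have e1 : ∀ x, g x ^ 2 = ∑ y, ∑ z, b y * b z * (Sm E x y * Sm E x z) := by
        intro x
        rw [hg, sq, Finset.sum_mul_sum]
        exact Finset.sum_congr rfl fun y _ => Finset.sum_congr rfl fun z _ => by ring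
      rw [Finset.sum_congr rfl fun x _ => e1 x, Finset.sum_comm]
      refine Finset.sum_congr rfl fun y _ => ?_
      rw [Finset.sum_comm]
      refine Finset.sum_congr rfl fun z _ => ?_
      rw [Finset.mul_sum]
    rw [expand]
    have e2 : ∀ y z : Fin n, b y * b z * ∑ x, Sm E x y * Sm E x z
        = b y * b z * ((if y = z then (n:ℝ) else 0) - 1) := by
      intro y z; rw [key_identity hT hn hout hco]
    simp only [e2, mul_sub, mul_one, Finset.sum_sub_distrib]
    have e3 : ∀ y : Fin n, ∑ z, b y * b z * (if y = z then (n:ℝ) else 0)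
        = (n : ℝ) * b y ^ 2 := by
      intro y
      rw [Finset.sum_eq_single_of_mem y (Finset.mem_univ y)]
      · rw [if_pos rfl]; ring
      · intro z _ hz; rw [if_neg (Ne.symm hz), mul_zero]
    rw [Finset.sum_congr rfl fun y _ => e3 y, ← Finset.mul_sum]
    have e4 : ∑ y : Fin n, ∑ z, b y * b z = (∑ y, b y) ^ 2 := by
      rw [sq, Finset.sum_mul_sum]
    rw [e4]
    nlinarith [sq_nonneg (∑ y, b y)]
  rw [hLHS]
  have cs : (∑ x, a x * g x) ^ 2 ≤ (∑ x, a x ^ 2) * ∑ x, g x ^ 2 :=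
    Finset.sum_mul_sq_le_sq_mul_sq _ _ _
  have hbound : (∑ x, a x * g x) ^ 2 ≤ (∑ x, a x ^ 2) * ((n:ℝ) * ∑ y, b y ^ 2) := by
    have ha2 : (0:ℝ) ≤ ∑ x, a x ^ 2 := Finset.sum_nonneg fun x _ => sq_nonneg _
    nlinarith
  have h1 : ∑ x, a x * g x ≤ Real.sqrt ((∑ x, a x ^ 2) * ((n:ℝ) * ∑ y, b y ^ 2)) := by
    calc ∑ x, a x * g x ≤ |∑ x, a x * g x| := le_abs_self _
      _ = Real.sqrt ((∑ x, a x * g x) ^ 2) := (Real.sqrt_sq_eq_abs _).symm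
      _ ≤ _ := Real.sqrt_le_sqrt hbound
  calc ∑ x, a x * g x ≤ Real.sqrt ((∑ x, a x ^ 2) * ((n:ℝ) * ∑ y, b y ^ 2)) := h1
    _ = Real.sqrt n * Real.sqrt (∑ x, a x ^ 2) * Real.sqrt (∑ y, b y ^ 2) := by
      rw [Real.sqrt_mul (Finset.sum_nonneg fun x _ => sq_nonneg _),
        Real.sqrt_mul (by positivity : (0:ℝ) ≤ (n:ℝ))]
      ring

include hT hn hout hco in
lemma pair_bound (a b : Fin n → ℝ) (ha : ∀ x, a x = 0 ∨ a x = 1) (hb : ∀ x, b x = 0 ∨ b x = 1) :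
    ∑ x, ∑ y, a x * Sm E x y * b y
      ≤ Real.sqrt n * ((∑ x, a x + ∑ y, b y) / 2) := by
  have key := op_bound hT hn hout hco a b
  have ha2 : ∑ x, a x ^ 2 = ∑ x, a x :=
    Finset.sum_congr rfl fun x _ => by rcases ha x with h | h <;> rw [h] <;> norm_num
  have hb2 : ∑ y, b y ^ 2 = ∑ y, b y :=
    Finset.sum_congr rfl fun y _ => by rcases hb y with h | h <;> rw [h] <;> norm_num
  rw [ha2, hb2] at key
  have hP : (0:ℝ) ≤ ∑ x, a x := Finset.sum_nonneg fun x _ => by rcases ha x with h | h <;> simp [h]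
  have hQ : (0:ℝ) ≤ ∑ y, b y := Finset.sum_nonneg fun y _ => by rcases hb y with h | h <;> simp [h]
  have hsn : (0:ℝ) ≤ Real.sqrt n := Real.sqrt_nonneg _
  have amgm : Real.sqrt (∑ x, a x) * Real.sqrt (∑ y, b y) ≤ (∑ x, a x + ∑ y, b y) / 2 := by
    nlinarith [sq_nonneg (Real.sqrt (∑ x, a x) - Real.sqrt (∑ y, b y)),
      Real.sq_sqrt hP, Real.sq_sqrt hQ]
  calc ∑ x, ∑ y, a x * Sm E x y * b y
      ≤ Real.sqrt n * Real.sqrt (∑ x, a x) * Real.sqrt (∑ y, b y) := key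
    _ ≤ Real.sqrt n * ((∑ x, a x + ∑ y, b y) / 2) := by
      rw [mul_assoc]
      exact mul_le_mul_of_nonneg_left amgm hsn

end Main

end AUX1

noncomputable def numConsistent {n : ℕ} (E : Fin n → Fin n → Prop)
    (σ : Equiv.Perm (Fin n)) : ℕ :=
  Nat.card {p : Fin n × Fin n // E p.1 p.2 ∧ σ p.1 < σ p.2}

noncomputable def maxConsistent {n : ℕ} (E : Fin n → Fin n → Prop) : ℕ :=
  Finset.univ.sup fun σ : Equiv.Perm (Fin n) => numConsistent E σ

lemma ind_eq_ite {p : Prop} [Decidable p] : ind p = if p then (1:ℝ) else 0 := by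
  by_cases h : p <;> simp [ind, h]

section MainProof

open Finset Real

variable {n : ℕ} {E : Fin n → Fin n → Prop} {k : ℕ}

theorem numConsistent_bound (hT : IsTournament E) (hn : n = 4 * k + 3)
    (hout : ∀ x, outDeg E x = 2 * k + 1)
    (hco : ∀ x y : Fin n, x ≠ y → commonOut E x y = k) (σ : Equiv.Perm (Fin n)) :
    (numConsistent E σ : ℝ) ≤ (n.choose 2 : ℝ) / 2
      + (n : ℝ) ^ ((3 : ℝ) / 2) * Real.logb 2 (2 * n) := by
  classical
  have hn3 : 3 ≤ n := by omega
  have hn0 : (0:ℝ) < n := by positivity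
  set L : ℕ := n.log2 + 1 with hL
  have hnL : n < 2 ^ L := Nat.lt_log2_self
  -- value of σ as ℕ
  set p : Fin n → ℕ := fun x => ((σ x : Fin n) : ℕ) with hp
  have hplt : ∀ x, p x < 2 ^ L := fun x => lt_trans (σ x).isLt hnL
  -- indicator families
  set A : ℕ → ℕ → Fin n → ℝ :=
    fun t c x => ind ((p x) >>> (t+1) = c ∧ (p x).testBit t = false) with hA
  set B : ℕ → ℕ → Fin n → ℝ :=
    fun t c y => ind ((p y) >>> (t+1) = c ∧ (p y).testBit t = true) with hB
  -- decomposition of the order indicator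
  have decomp : ∀ x y : Fin n, ind (σ x < σ y)
      = ∑ t ∈ range L, ∑ c ∈ range (2 ^ L), A t c x * B t c y := by
    intro x y
    have h1 : ind (σ x < σ y) = if p x < p y then (1:ℝ) else 0 := by
      rw [ind_eq_ite]
      congr 1
    rw [h1, bit_decomp L (p x) (p y) (hplt y)]
    refine Finset.sum_congr rfl fun t _ => ?_
    rw [bit_split L (p x) (p y) t (hplt x)]
    refine Finset.sum_congr rfl fun c _ => ?_
    rw [hA, hB]
    simp only [ind_eq_ite]
  -- the skew sum F
  set F : ℝ := ∑ x, ∑ y, Sm E x y * ind (σ x < σ y) with hF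
  -- rearrangement
  have hFeq : F = ∑ t ∈ range L, ∑ c ∈ range (2 ^ L),
      ∑ x, ∑ y, A t c x * Sm E x y * B t c y := by
    rw [hF]
    have e1 : ∀ x y : Fin n, Sm E x y * ind (σ x < σ y)
        = ∑ t ∈ range L, ∑ c ∈ range (2 ^ L), A t c x * Sm E x y * B t c y := by
      intro x y
      rw [decomp x y, Finset.mul_sum]
      refine Finset.sum_congr rfl fun t _ => ?_
      rw [Finset.mul_sum]
      exact Finset.sum_congr rfl fun c _ => by ring
    simp only [e1]
    calc ∑ x : Fin n, ∑ y : Fin n, ∑ t ∈ range L, ∑ c ∈ range (2 ^ L),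
            A t c x * Sm E x y * B t c y
        = ∑ x : Fin n, ∑ t ∈ range L, ∑ y : Fin n, ∑ c ∈ range (2 ^ L),
            A t c x * Sm E x y * B t c y :=
          Finset.sum_congr rfl fun x _ => Finset.sum_comm
      _ = ∑ t ∈ range L, ∑ x : Fin n, ∑ y : Fin n, ∑ c ∈ range (2 ^ L),
            A t c x * Sm E x y * B t c y := Finset.sum_comm
      _ = ∑ t ∈ range L, ∑ x : Fin n, ∑ c ∈ range (2 ^ L), ∑ y : Fin n,
            A t c x * Sm E x y * B t c y :=
          Finset.sum_congr rfl fun t _ => Finset.sum_congr rfl fun x _ => Finset.sum_comm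
      _ = ∑ t ∈ range L, ∑ c ∈ range (2 ^ L), ∑ x : Fin n, ∑ y : Fin n,
            A t c x * Sm E x y * B t c y :=
          Finset.sum_congr rfl fun t _ => Finset.sum_comm
  -- per (t,c) bound and summation over c
  have hsumc : ∀ t ∈ range L, ∑ c ∈ range (2 ^ L),
      ∑ x, ∑ y, A t c x * Sm E x y * B t c y ≤ Real.sqrt n * n / 2 := by
    intro t _
    have hbound : ∀ c ∈ range (2 ^ L), ∑ x, ∑ y, A t c x * Sm E x y * B t c y
        ≤ Real.sqrt n * ((∑ x, A t c x + ∑ y, B t c y) / 2) :=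
      fun c _ => pair_bound hT hn hout hco _ _
        (fun x => ind_zero_or_one _) (fun x => ind_zero_or_one _)
    calc ∑ c ∈ range (2 ^ L), ∑ x, ∑ y, A t c x * Sm E x y * B t c y
        ≤ ∑ c ∈ range (2 ^ L), Real.sqrt n * ((∑ x, A t c x + ∑ y, B t c y) / 2) :=
          Finset.sum_le_sum hbound
      _ = Real.sqrt n / 2 * ∑ c ∈ range (2 ^ L), (∑ x, (A t c x + B t c x)) := by
          rw [Finset.mul_sum]
          refine Finset.sum_congr rfl fun c _ => ?_
          rw [Finset.sum_add_distrib]; ring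
      _ = Real.sqrt n / 2 * ∑ x : Fin n, ∑ c ∈ range (2 ^ L), (A t c x + B t c x) := by
          rw [Finset.sum_comm]
      _ = Real.sqrt n / 2 * ∑ x : Fin n, 1 := by
          congr 1
          refine Finset.sum_congr rfl fun x _ => ?_
          have hmem : (p x) >>> (t+1) ∈ range (2 ^ L) := by
            rw [mem_range, Nat.shiftRight_eq_div_pow]
            exact lt_of_le_of_lt (Nat.div_le_self _ _) (hplt x)
          rw [Finset.sum_eq_single_of_mem _ hmem]
          · rw [hA, hB]
            cases hb : (p x).testBit t <;> simp [ind, hb]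
          · intro c _ hcne
            rw [hA, hB]
            simp only [ind]
            rw [if_neg fun hc => hcne hc.1.symm, if_neg fun hc => hcne hc.1.symm, add_zero]
      _ = Real.sqrt n * n / 2 := by
          rw [Finset.sum_const, Finset.card_univ, Fintype.card_fin, nsmul_eq_mul, mul_one]
          ring
  have hFle : F ≤ (L : ℝ) * (Real.sqrt n * n / 2) := by
    rw [hFeq]
    calc ∑ t ∈ range L, ∑ c ∈ range (2 ^ L), ∑ x, ∑ y, A t c x * Sm E x y * B t c y
        ≤ ∑ t ∈ range L, Real.sqrt n * n / 2 := Finset.sum_le_sum hsumc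
      _ = (L : ℝ) * (Real.sqrt n * n / 2) := by
          rw [Finset.sum_const, Finset.card_range, nsmul_eq_mul]
  -- counting identities
  have hC : (numConsistent E σ : ℝ) = ∑ x, ∑ y, ind (E x y) * ind (σ x < σ y) := by
    rw [numConsistent, natCard_eq_sum, Fintype.sum_prod_type]
    simp only [ind_mul]
  set C' : ℝ := ∑ x, ∑ y, ind (E x y) * ind (σ y < σ x) with hC'
  have hCC' : (numConsistent E σ : ℝ) + C' = (n.choose 2 : ℝ) := by
    rw [hC, hC', ← Finset.sum_add_distrib]
    have e : ∀ x : Fin n, (∑ y, ind (E x y) * ind (σ x < σ y))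
        + ∑ y, ind (E x y) * ind (σ y < σ x) = ∑ y, ind (E x y) := by
      intro x
      rw [← Finset.sum_add_distrib]
      refine Finset.sum_congr rfl fun y _ => ?_
      by_cases hxy : x = y
      · subst hxy
        simp [ind, hT.1 x]
      · have hne : σ x ≠ σ y := fun h => hxy (σ.injective h)
        rcases lt_or_gt_of_ne hne with h | h
        · simp [ind, h, not_lt_of_gt h]
        · simp [ind, h, not_lt_of_gt h]
    rw [Finset.sum_congr rfl fun x _ => e x]
    have e2 : ∀ x : Fin n, ∑ y, ind (E x y) = (2 * k + 1 : ℝ) :=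
      fun x => row_sum hout x
    rw [Finset.sum_congr rfl fun x _ => e2 x, Finset.sum_const, Finset.card_univ,
      Fintype.card_fin, nsmul_eq_mul]
    have hch : (n.choose 2 : ℕ) = n * (2 * k + 1) := by
      subst hn
      rw [Nat.choose_two_right]
      rw [show 4 * k + 3 - 1 = 2 * (2 * k + 1) from by omega]
      rw [show (4 * k + 3) * (2 * (2 * k + 1)) = (4 * k + 3) * (2 * k + 1) * 2 from by ring]
      rw [Nat.mul_div_cancel _ (by norm_num)]
    rw [hch]
    push_cast
    ring
  have hFC : F = (numConsistent E σ : ℝ) - C' := by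
    rw [hF, hC, hC']
    have e : ∀ x y : Fin n, Sm E x y * ind (σ x < σ y)
        = ind (E x y) * ind (σ x < σ y) - ind (E y x) * ind (σ x < σ y) := by
      intro x y; rw [Sm]; ring
    simp only [e, Finset.sum_sub_distrib]
    congr 1
    rw [Finset.sum_comm]
  -- final numeric bound
  have hlogb : (L : ℝ) ≤ Real.logb 2 (2 * n) := by
    have h2n : Real.logb 2 (2 * n) = 1 + Real.logb 2 n := by
      rw [Real.logb_mul (by norm_num) (ne_of_gt hn0), Real.logb_self_eq_one (by norm_num)]
    have hlog2 : (n.log2 : ℝ) ≤ Real.logb 2 n := by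
      have hpow : (2:ℝ) ^ (n.log2 : ℕ) ≤ n := by
        exact_mod_cast Nat.log2_self_le (by omega)
      have := Real.rpow_natCast (2:ℝ) n.log2
      rw [Real.le_logb_iff_rpow_le (by norm_num) hn0, this]
      exact hpow
    rw [h2n, hL]
    push_cast
    linarith
  have hpow32 : (n : ℝ) ^ ((3:ℝ)/2) = (n:ℝ) * Real.sqrt n := by
    rw [show (3:ℝ)/2 = 1 + 1/2 from by norm_num, Real.rpow_add hn0, Real.rpow_one,
      ← Real.sqrt_eq_rpow]
  have hsn : (0:ℝ) ≤ Real.sqrt n := Real.sqrt_nonneg _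
  have hL1 : (1:ℝ) ≤ (L:ℝ) := by rw [hL]; push_cast; linarith [Nat.zero_le n.log2]
  have final : (L : ℝ) * (Real.sqrt n * n / 2) / 2 ≤ (n : ℝ) ^ ((3:ℝ)/2) * Real.logb 2 (2 * n) := by
    rw [hpow32]
    have h1 : (L : ℝ) * (Real.sqrt n * n / 2) / 2 = (n * Real.sqrt n) * ((L:ℝ)/4) := by ring
    rw [h1]
    apply mul_le_mul_of_nonneg_left _ (by positivity)
    linarith
  linarith
end MainProof
theorem maxConsistent_le_of_doublyRegular {n : ℕ} (E : Fin n → Fin n → Prop)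
    (hDR : IsDoublyRegular E) :
    (maxConsistent E : ℝ) ≤ (n.choose 2 : ℝ) / 2
      + (n : ℝ) ^ ((3 : ℝ) / 2) * Real.logb 2 (2 * n) := by
  obtain ⟨hT, k, hcard, hout, hco⟩ := hDR
  have hn : n = 4 * k + 3 := by rwa [Fintype.card_fin] at hcard
  obtain ⟨σ, -, hσ⟩ := Finset.exists_mem_eq_sup (Finset.univ : Finset (Equiv.Perm (Fin n)))
    Finset.univ_nonempty (fun σ => numConsistent E σ)
  rw [maxConsistent, hσ]
  exact numConsistent_bound hT hn hout hco σ
end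

section
/- Let p ≡ 3 (mod 4) be a prime. The Paley tournament T_p, with vertex set 𝔽_p and an edge from x to y iff x - y is a nonzero square in 𝔽_p, is a doubly regular tournament. -/
open Finset

section Helpers

variable {F : Type*} [Field F] [Fintype F] [DecidableEq F]

private def shiftInvEquiv (c : F) (hc : c ≠ 0) : F ≃ F where
  toFun t := 1 - c * t⁻¹
  invFun w := c * (1 - w)⁻¹
  left_inv t := by
    rcases eq_or_ne t 0 with rfl | ht
    · simp
    · field_simp
      rw [sub_sub_cancel, div_self hc]
  right_inv w := by
    rcases eq_or_ne w 1 with rfl | hw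
    · simp
    · have h1 : 1 - w ≠ 0 := sub_ne_zero.mpr (Ne.symm hw)
      field_simp
      ring

private lemma chi_sum_shift (hF : ringChar F ≠ 2) {c : F} (hc : c ≠ 0) :
    ∑ t : F, quadraticChar F t * quadraticChar F (t - c) = -1 := by
  have key : ∀ t : F, quadraticChar F t * quadraticChar F (t - c)
      = quadraticChar F (shiftInvEquiv c hc t) - (if t = 0 then 1 else 0) := by
    intro t
    rcases eq_or_ne t 0 with rfl | ht
    · simp [shiftInvEquiv]
    · have ht2 : t * (t - c) = t ^ 2 * (1 - c * t⁻¹) := by field_simp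
      simp only [shiftInvEquiv, Equiv.coe_fn_mk, if_neg ht, sub_zero]
      rw [← map_mul, ht2, map_mul, quadraticChar_sq_one' ht, one_mul]
  simp only [key]
  rw [Finset.sum_sub_distrib, Equiv.sum_comp (shiftInvEquiv c hc) (quadraticChar F ·),
    quadraticChar_sum_zero hF]
  simp

end Helpers

/-- The Paley tournament: edge from `x` to `y` iff `x - y` is a nonzero square in `𝔽_p`. -/
def paley (p : ℕ) : ZMod p → ZMod p → Prop :=
  fun x y => x - y ≠ 0 ∧ IsSquare (x - y)

theorem paley_isDoublyRegular (p : ℕ) [Fact p.Prime] (hp : p % 4 = 3) :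
    IsDoublyRegular (paley p) := by
  classical
  have hp2 : p ≠ 2 := by omega
  have hF : ringChar (ZMod p) ≠ 2 := by rw [ZMod.ringChar_zmod_n]; exact hp2
  have hcard : Fintype.card (ZMod p) = p := ZMod.card p
  set χ := quadraticChar (ZMod p) with hχ
  have hns : ¬ IsSquare (-1 : ZMod p) := by
    rw [FiniteField.isSquare_neg_one_iff, hcard, hp]; simp
  have hχneg1 : χ (-1) = -1 := quadraticChar_neg_one_iff_not_isSquare.mpr hns
  have hχneg : ∀ u : ZMod p, χ (-u) = - χ u := by
    intro u
    rw [show -u = -1 * u by ring, map_mul, hχneg1, neg_one_mul]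
  have hpk := Nat.div_add_mod p 4
  set k := p / 4 with hk
  have hpk' : p = 4 * k + 3 := by omega
  have hkey : ∀ u : ZMod p, u ≠ 0 → (IsSquare u ↔ ¬ IsSquare (-u)) := by
    intro u hu
    rw [← quadraticChar_one_iff_isSquare hu, ← quadraticChar_neg_one_iff_not_isSquare, hχneg]
    constructor <;> intro h <;> linarith
  -- the sum ∑ χ over a shifted copy of the field
  have hshift : ∀ x : ZMod p, ∑ y : ZMod p, χ (x - y) = 0 := by
    intro x
    have h0 : ∑ y : ZMod p, χ (x - y) = ∑ u : ZMod p, χ u :=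
      Fintype.sum_equiv (Equiv.subLeft x) _ _ (fun y => rfl)
    rw [h0, hχ, quadraticChar_sum_zero hF]
  -- tournament
  have htour : IsTournament (paley p) := by
    refine ⟨fun x h => h.1 (by simp), fun x y hxy => ?_⟩
    have hu : x - y ≠ 0 := sub_ne_zero.mpr hxy
    have h1 : y - x = -(x - y) := by ring
    constructor
    · rintro ⟨-, hs⟩ ⟨-, hs'⟩
      rw [h1] at hs'
      exact ((hkey _ hu).mp hs) hs'
    · intro h
      refine ⟨hu, (hkey _ hu).mpr ?_⟩
      intro hs'
      exact h ⟨sub_ne_zero.mpr hxy.symm, by rwa [h1]⟩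
  refine ⟨htour, k, by rw [hcard, hpk'], ?_, ?_⟩
  -- out-degrees
  · intro x
    have hb : outDeg (paley p) x = (univ.filter (fun y => paley p x y)).card := by
      rw [outDeg, Nat.card_eq_fintype_card, Fintype.card_subtype]
    have hpt : ∀ y : ZMod p, 1 + χ (x - y)
        = (if paley p x y then (2:ℤ) else 0) + (if y = x then 1 else 0) := by
      intro y
      rcases eq_or_ne y x with rfl | hyx
      · simp [paley, χ]
      · have hu : x - y ≠ 0 := sub_ne_zero.mpr (Ne.symm hyx)
        rcases quadraticChar_dichotomy hu with h1 | h1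
        · have hps : paley p x y := ⟨hu, (quadraticChar_one_iff_isSquare hu).mp h1⟩
          simp [hps, hχ, h1, hyx]
        · have hps : ¬ paley p x y := by
            rintro ⟨-, hs⟩
            rw [← quadraticChar_one_iff_isSquare hu] at hs
            rw [hs] at h1; norm_num at h1
          simp [hps, hχ, h1, hyx]
    have hsum : ∑ y : ZMod p, (1 + χ (x - y)) = p := by
      rw [Finset.sum_add_distrib, hshift x]
      simp [hcard]
    have hA : ∑ y : ZMod p, (if paley p x y then (2:ℤ) else 0)
        = 2 * ((univ.filter (fun y => paley p x y)).card : ℤ) := by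
      rw [Finset.sum_ite, Finset.sum_const, Finset.sum_const]
      simp [mul_comm]
    have hB : ∑ y : ZMod p, (if y = x then (1:ℤ) else 0) = 1 := by
      rw [Finset.sum_ite_eq' univ x (fun _ => (1:ℤ))]
      simp
    have hfin : (p:ℤ) = 2 * ((univ.filter (fun y => paley p x y)).card : ℤ) + 1 := by
      rw [← hsum, Finset.sum_congr rfl (fun y _ => hpt y), Finset.sum_add_distrib, hA, hB]
    rw [hb]
    omega
  -- common out-neighbors
  · intro x y hxy
    have hb : commonOut (paley p) x y
        = (univ.filter (fun z => paley p x z ∧ paley p y z)).card := by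
      rw [commonOut, Nat.card_eq_fintype_card, Fintype.card_subtype]
    have hpt : ∀ z : ZMod p, (1 + χ (x - z)) * (1 + χ (y - z))
        = (if paley p x z ∧ paley p y z then (4:ℤ) else 0)
          + ((if z = x then 1 + χ (y - x) else 0) + (if z = y then 1 + χ (x - y) else 0)) := by
      intro z
      rcases eq_or_ne z x with rfl | hzx
      · simp [paley, hχ, Ne.symm hxy, hxy]
      · rcases eq_or_ne z y with rfl | hzy
        · simp [paley, hχ, hzx]
        · have hu : x - z ≠ 0 := sub_ne_zero.mpr (Ne.symm hzx)
          have hv : y - z ≠ 0 := sub_ne_zero.mpr (Ne.symm hzy)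
          have hiff : ∀ w : ZMod p, (hw : w ≠ 0) → χ w = 1 ↔ IsSquare w := by
            intro w hw; exact quadraticChar_one_iff_isSquare hw
          rcases quadraticChar_dichotomy hu with h1 | h1 <;>
            rcases quadraticChar_dichotomy hv with h2 | h2
          · have hps : paley p x z ∧ paley p y z :=
              ⟨⟨hu, (quadraticChar_one_iff_isSquare hu).mp h1⟩,
               ⟨hv, (quadraticChar_one_iff_isSquare hv).mp h2⟩⟩
            simp [hps, hχ, h1, h2, hzx, hzy]
          · have hps : ¬ (paley p x z ∧ paley p y z) := by
              rintro ⟨-, -, hs⟩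
              rw [← quadraticChar_one_iff_isSquare hv] at hs
              rw [hs] at h2; norm_num at h2
            simp [hps, hχ, h1, h2, hzx, hzy]
          · have hps : ¬ (paley p x z ∧ paley p y z) := by
              rintro ⟨⟨-, hs⟩, -⟩
              rw [← quadraticChar_one_iff_isSquare hu] at hs
              rw [hs] at h1; norm_num at h1
            simp [hps, hχ, h1, h2, hzx, hzy]
          · have hps : ¬ (paley p x z ∧ paley p y z) := by
              rintro ⟨⟨-, hs⟩, -⟩
              rw [← quadraticChar_one_iff_isSquare hu] at hs
              rw [hs] at h1; norm_num at h1
            simp [hps, hχ, h1, h2, hzx, hzy]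
    -- the cross character sum
    have hc : x - y ≠ 0 := sub_ne_zero.mpr hxy
    have hS : ∑ z : ZMod p, χ (x - z) * χ (y - z) = -1 := by
      have h0 : ∑ z : ZMod p, χ (x - z) * χ (y - z)
          = ∑ t : ZMod p, χ t * χ (t - (x - y)) := by
        refine Fintype.sum_equiv (Equiv.subLeft x) _ _ (fun z => ?_)
        have : x - z - (x - y) = y - z := by ring
        simp [this]
      rw [h0, hχ]
      exact chi_sum_shift hF hc
    have hsumL : ∑ z : ZMod p, (1 + χ (x - z)) * (1 + χ (y - z)) = (p:ℤ) - 1 := by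
      have hexp : ∀ z : ZMod p, (1 + χ (x - z)) * (1 + χ (y - z))
          = 1 + χ (x - z) + χ (y - z) + χ (x - z) * χ (y - z) := fun z => by ring
      rw [Finset.sum_congr rfl (fun z _ => hexp z), Finset.sum_add_distrib,
        Finset.sum_add_distrib, Finset.sum_add_distrib, hshift x, hshift y, hS]
      simp [hcard]
      ring
    have hA : ∑ z : ZMod p, (if paley p x z ∧ paley p y z then (4:ℤ) else 0)
        = 4 * ((univ.filter (fun z => paley p x z ∧ paley p y z)).card : ℤ) := by
      rw [Finset.sum_ite, Finset.sum_const, Finset.sum_const]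
      simp [mul_comm]
    have hB1 : ∑ z : ZMod p, (if z = x then 1 + χ (y - x) else 0) = 1 + χ (y - x) := by
      rw [Finset.sum_ite_eq' univ x (fun _ => 1 + χ (y - x))]
      simp
    have hB2 : ∑ z : ZMod p, (if z = y then 1 + χ (x - y) else 0) = 1 + χ (x - y) := by
      rw [Finset.sum_ite_eq' univ y (fun _ => 1 + χ (x - y))]
      simp
    have hanti : χ (y - x) = - χ (x - y) := by
      rw [show y - x = -(x - y) by ring, hχneg]
    have hfin : (p:ℤ) - 1
        = 4 * ((univ.filter (fun z => paley p x z ∧ paley p y z)).card : ℤ) + 2 := by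
      rw [← hsumL, Finset.sum_congr rfl (fun z _ => hpt z), Finset.sum_add_distrib,
        Finset.sum_add_distrib, hA, hB1, hB2, hanti]
      ring
    rw [hb]
    omega
end
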